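/- Let D ⊂ ℝ^d be a bounded measurable set, let T > 0, and let G satisfy the Gaussian property with constants c₁, c₂. Let f : ℝ → ℝ satisfy |f(u)| ≤ L(1+|u|) for all u, and let u : D × [0,T] → ℝ be measurable with u(·,s) ∈ L²(D) for each s. Then for every t ∈ (0,T], ∫_D ( ∫_0^t ∫_D |G(x,t;y,s) f(u(y,s))| dy ds )² dx ≤ C ( 1 + ∫_0^t ‖u(·,s)‖₂² ds ), where C depends only on c₁, c₂, d, L, T and the Lebesgue measure of D. -/

import Mathlib

open MeasureTheory Real Set
open scoped ENNReal NNReal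

noncomputable section

/-- Euclidean space `ℝ^d`. -/
abbrev Euc (d : ℕ) : Type := EuclideanSpace ℝ (Fin d)

/-- The Gaussian heat-kernel bound `r^{-d/2} exp(-c₂ |x-y|² / r)`. -/
def gaussKer (d : ℕ) (c₂ r : ℝ) (x y : Euc d) : ℝ :=
  r ^ (-(d : ℝ) / 2) * Real.exp (-c₂ * ‖x - y‖ ^ 2 / r)

/-- `G` satisfies the Gaussian property with constants `c₁, c₂` on `D × [0,T]`. -/
def GaussianProperty {d : ℕ} (D : Set (Euc d)) (T c₁ c₂ : ℝ)
    (G : Euc d → ℝ → Euc d → ℝ → ℝ) : Prop :=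
  ∀ x ∈ D, ∀ y ∈ D, ∀ s t : ℝ, 0 ≤ s → s < t → t ≤ T →
    |G x t y s| ≤ c₁ * gaussKer d c₂ (t - s) x y

/-- Second-variable difference estimate with exponent `δ`. -/
def SecondVarDiff {d : ℕ} (D : Set (Euc d)) (T c₂ δ : ℝ)
    (G : Euc d → ℝ → Euc d → ℝ → ℝ) : Prop :=
  ∀ x ∈ D, ∀ y ∈ D, ∀ r v t : ℝ, 0 < r → r < v → v < t → t ≤ T →
    ∃ ts ∈ Ioo r v,
      |G x t y v - G x t y r| ≤ (t - v) ^ (-δ) * (v - r) ^ δ * gaussKer d c₂ (t - ts) x y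

/-- First-variable difference estimate with exponent `δ`. -/
def FirstVarDiff {d : ℕ} (D : Set (Euc d)) (T c₂ δ : ℝ)
    (G : Euc d → ℝ → Euc d → ℝ → ℝ) : Prop :=
  ∀ x ∈ D, ∀ y ∈ D, ∀ v s t : ℝ, 0 ≤ v → v < s → s < t → t ≤ T →
    ∃ vs ∈ Ioo s t,
      |G x t y v - G x s y v| ≤ (t - s) ^ δ * (s - v) ^ (-δ) * gaussKer d c₂ (vs - v) x y

/-- Mixed second-difference estimate with exponent `δ`. -/
def MixedDiff {d : ℕ} (D : Set (Euc d)) (T c₂ δ : ℝ)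
    (G : Euc d → ℝ → Euc d → ℝ → ℝ) : Prop :=
  ∀ x ∈ D, ∀ y ∈ D, ∀ r v s t : ℝ, 0 < r → r < v → v < s → s < t → t ≤ T →
    ∃ vs ∈ Ioo s t, ∃ rs ∈ Ioo s t,
      |G x t y v - G x s y v - G x t y r + G x s y r| ≤
        (t - s) ^ δ * (s - v)⁻¹ * (v - r) ^ (1 - δ) *
          (gaussKer d c₂ (vs - v) x y + gaussKer d c₂ (rs - r) x y)

/-- The `L²(D)` norm (with values in `[0,∞]`). -/
def L2N {d : ℕ} (D : Set (Euc d)) (f : Euc d → ℝ) : ℝ≥0∞ :=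
  eLpNorm f 2 (volume.restrict D)

/-- The Hölder-type seminorm `‖f‖_{α,0;t}` (with values in `[0,∞]`). -/
def hsem (α t : ℝ) (f : ℝ → ℝ) : ℝ≥0∞ :=
  ⨆ (u : ℝ) (v : ℝ) (_ : 0 ≤ u) (_ : u < v) (_ : v < t),
    (ENNReal.ofReal (|f v - f u| / (v - u) ^ (1 - α)) +
      ∫⁻ z in Ioo u v, ENNReal.ofReal (|f u - f z| / (z - u) ^ (2 - α)))

/-- The Riemann–Liouville left-sided fractional derivative `D^α_{a+} F`. -/
def RLplus (α a : ℝ) (F : ℝ → ℝ) (s : ℝ) : ℝ :=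
  (Real.Gamma (1 - α))⁻¹ *
    (F s / (s - a) ^ α + α * ∫ v in Ioo a s, (F s - F v) / (s - v) ^ (α + 1))

/-- The Riemann–Liouville right-sided fractional derivative `D^{1-α}_{b-} g_{b-}`
(of the function `g_{b-}(x) = g(b) - g(x)`). -/
def RLminus (α b : ℝ) (g : ℝ → ℝ) (s : ℝ) : ℝ :=
  (Real.Gamma α)⁻¹ *
    ((g b - g s) / (b - s) ^ (1 - α) +
      (1 - α) * ∫ y in Ioo s b, (g y - g s) / (y - s) ^ (2 - α))

/-- The (pointwise, real-valued) generalized Lebesgue–Stieltjes integral `∫_a^b F dg`. -/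
def glsIntegral (α a b : ℝ) (F g : ℝ → ℝ) : ℝ :=
  ∫ s in Ioc a b, RLplus α a F s * RLminus α b g s

/-- The square of the norm `‖u‖_{α,2,t}` of `𝓑^{α,2}(0,t;L²(D))` (with values in `[0,∞]`). -/
def wnormSq {d : ℕ} (D : Set (Euc d)) (α t : ℝ) (u : ℝ → Euc d → ℝ) : ℝ≥0∞ :=
  (⨆ s ∈ Icc (0 : ℝ) t, L2N D (u s)) ^ 2 +
    ∫⁻ s in Ioc (0 : ℝ) t,
      (∫⁻ v in Ioo (0 : ℝ) s, L2N D (u s - u v) * ENNReal.ofReal ((s - v) ^ (-α - 1))) ^ 2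

/-- The kernel `a_{j,t}(u)(x,s) = ∫_D G(x,t;y,s) h(u(y,s)) e(y) dy` with `h(z) = p z + q`. -/
def aKer {d : ℕ} (D : Set (Euc d)) (G : Euc d → ℝ → Euc d → ℝ → ℝ) (p q : ℝ)
    (u : ℝ → Euc d → ℝ) (e : Euc d → ℝ) (t : ℝ) (x : Euc d) (s : ℝ) : ℝ :=
  ∫ y in D, G x t y s * (p * u s y + q) * e y

/-- `I_h(x,t) = Σ_j μ_j^{1/2} ∫_0^t a_{j,t}(u)(x,s) dZ_j(s)` (pointwise in `x`). -/
def Ihat {d : ℕ} (D : Set (Euc d)) (G : Euc d → ℝ → Euc d → ℝ → ℝ) (p q : ℝ)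
    (u : ℝ → Euc d → ℝ) (e : ℕ → Euc d → ℝ) (μ : ℕ → ℝ) (Z : ℕ → ℝ → ℝ)
    (α t : ℝ) (x : Euc d) : ℝ :=
  ∑' j, Real.sqrt (μ j) * glsIntegral α 0 t (fun s => aKer D G p q u (e j) t x s) (Z j)

end

/-!
Bound `|G f(u)|` by `c₁ L` times the Gaussian kernel times `1 + |u|`. In each space variable
the Gaussian kernel has mass at most `(π / c₂)^{d/2}`, whatever the time lag, so on the cylinder
`(0, t) × D` its integral in `(s, y)` is at most `(π / c₂)^{d/2} T` and its integral in `x` at most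
`(π / c₂)^{d/2}`. Cauchy–Schwarz against the kernel (Schur's test) then bounds the `L²(D)` norm of
the space–time integral by these two masses times `∫∫ (1 + |u|)² ≤ 2 T |D| + 2 ∫ ‖u(s)‖₂² ds`.
-/

open Function

section Gaussian

variable {V : Type*} [NormedAddCommGroup V] [InnerProductSpace ℝ V] [FiniteDimensional ℝ V]
  [MeasurableSpace V] [BorelSpace V]

theorem lintegral_ofReal_exp_neg_mul_sq_norm {b : ℝ} (hb : 0 < b) :
    ∫⁻ v : V, ENNReal.ofReal (Real.exp (-b * ‖v‖ ^ 2)) =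
      ENNReal.ofReal ((π / b) ^ (Module.finrank ℝ V / 2 : ℝ)) := by
  have hint : Integrable fun v : V => Real.exp (-b * ‖v‖ ^ 2) :=
    .of_integral_ne_zero <| by rw [GaussianFourier.integral_rexp_neg_mul_sq_norm hb]; positivity
  rw [← ofReal_integral_eq_lintegral_ofReal hint (.of_forall fun v => (Real.exp_pos _).le),
    GaussianFourier.integral_rexp_neg_mul_sq_norm hb]

end Gaussian

section GaussKer

variable {d : ℕ} {c₂ r : ℝ}

theorem gaussKer_nonneg (hr : 0 < r) (x y : Euc d) : 0 ≤ gaussKer d c₂ r x y := by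
  unfold gaussKer; positivity

theorem gaussKer_comm (x y : Euc d) : gaussKer d c₂ r x y = gaussKer d c₂ r y x := by
  rw [gaussKer, gaussKer, norm_sub_rev]

theorem measurable_gaussKer_sub (d : ℕ) (c₂ t : ℝ) :
    Measurable fun q : Euc d × ℝ × Euc d => gaussKer d c₂ (t - q.2.1) q.1 q.2.2 := by
  unfold gaussKer; fun_prop

theorem lintegral_gaussKer (hc₂ : 0 < c₂) (hr : 0 < r) (x : Euc d) :
    ∫⁻ y, ENNReal.ofReal (gaussKer d c₂ r x y) = ENNReal.ofReal ((π / c₂) ^ (d / 2 : ℝ)) := by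
  have hsplit : ∀ y, ENNReal.ofReal (gaussKer d c₂ r x y) = ENNReal.ofReal (r ^ (-(d : ℝ) / 2)) *
      ENNReal.ofReal (Real.exp (-(c₂ / r) * ‖y - x‖ ^ 2)) := fun y => by
    rw [gaussKer, ← ENNReal.ofReal_mul (by positivity), norm_sub_rev]
    congr 3
    ring
  simp_rw [hsplit]
  rw [lintegral_const_mul' _ _ ENNReal.ofReal_ne_top,
    lintegral_sub_right_eq_self (fun y : Euc d => ENNReal.ofReal (Real.exp (-(c₂ / r) * ‖y‖ ^ 2))),
    lintegral_ofReal_exp_neg_mul_sq_norm (by positivity), finrank_euclideanSpace_fin,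
    ← ENNReal.ofReal_mul (by positivity), div_div_eq_mul_div, mul_div_right_comm,
    Real.mul_rpow (by positivity) hr.le, mul_left_comm, ← Real.rpow_add hr]
  simp [neg_div]

theorem setLIntegral_gaussKer_le (hc₂ : 0 < c₂) (hr : 0 < r) (D : Set (Euc d)) (x : Euc d) :
    ∫⁻ y in D, ENNReal.ofReal (gaussKer d c₂ r x y) ≤ ENNReal.ofReal ((π / c₂) ^ (d / 2 : ℝ)) :=
  (setLIntegral_le_lintegral _ _).trans (lintegral_gaussKer hc₂ hr x).le

end GaussKer

theorem L2N_sq {d : ℕ} (D : Set (Euc d)) (f : Euc d → ℝ) :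
    L2N D f ^ 2 = ∫⁻ y in D, ‖f y‖ₑ ^ 2 := by
  simp_rw [L2N, eLpNorm_eq_eLpNorm' two_ne_zero ENNReal.ofNat_ne_top, ENNReal.toReal_ofNat,
    ← ENNReal.rpow_two, lintegral_rpow_enorm_eq_rpow_eLpNorm' two_pos]

theorem add_le_one_add_mul_one_add (a b : ℝ≥0∞) : a + b ≤ (1 + a) * (1 + b) :=
  calc a + b ≤ a + b + (1 + a * b) := le_self_add
    _ = (1 + a) * (1 + b) := by ring

section Schur

variable {α β : Type*} [MeasurableSpace α] [MeasurableSpace β] {μ : Measure α} {ν : Measure β}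

/-- Cauchy–Schwarz for the measure `g • μ`, applied to `1` and `w`. -/
theorem sq_lintegral_mul_le_lintegral_mul_lintegral_mul_sq {g w : α → ℝ≥0∞}
    (hg : Measurable g) (hw : Measurable w) :
    (∫⁻ a, g a * w a ∂μ) ^ 2 ≤ (∫⁻ a, g a ∂μ) * ∫⁻ a, g a * w a ^ 2 ∂μ := by
  have h := ENNReal.lintegral_mul_le_Lp_mul_Lq (μ.withDensity g) Real.HolderConjugate.two_two
    (f := 1) aemeasurable_const hw.aemeasurable
  simp only [Pi.mul_apply, Pi.one_apply, one_mul, one_pow, ENNReal.rpow_two] at h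
  rw [lintegral_withDensity_eq_lintegral_mul _ hg hw, lintegral_one, withDensity_apply _ .univ,
    Measure.restrict_univ, lintegral_withDensity_eq_lintegral_mul _ hg (hw.pow_const 2)] at h
  calc (∫⁻ a, g a * w a ∂μ) ^ 2
      ≤ ((∫⁻ a, g a ∂μ) ^ (1 / 2 : ℝ) * (∫⁻ a, g a * w a ^ 2 ∂μ) ^ (1 / 2 : ℝ)) ^ 2 :=
        pow_le_pow_left₀ zero_le h 2
    _ = (∫⁻ a, g a ∂μ) * ∫⁻ a, g a * w a ^ 2 ∂μ := by
        rw [mul_pow, ← ENNReal.rpow_two, ← ENNReal.rpow_mul, ← ENNReal.rpow_two,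
          ← ENNReal.rpow_mul]
        norm_num

variable [SFinite μ] [SFinite ν]

theorem lintegral_sq_lintegral_mul_le_of_schur {k : α → β → ℝ≥0∞} {w : β → ℝ≥0∞} {A B : ℝ≥0∞}
    (hk : Measurable (uncurry k)) (hw : Measurable w) (hA : ∀ a, ∫⁻ b, k a b ∂ν ≤ A)
    (hB : ∀ᵐ b ∂ν, ∫⁻ a, k a b ∂μ ≤ B) :
    ∫⁻ a, (∫⁻ b, k a b * w b ∂ν) ^ 2 ∂μ ≤ A * B * ∫⁻ b, w b ^ 2 ∂ν := by
  have hkw : Measurable (uncurry fun a b => k a b * w b ^ 2) :=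
    hk.mul ((hw.pow_const 2).comp measurable_snd)
  calc ∫⁻ a, (∫⁻ b, k a b * w b ∂ν) ^ 2 ∂μ
      ≤ ∫⁻ a, A * ∫⁻ b, k a b * w b ^ 2 ∂ν ∂μ := by
        refine lintegral_mono fun a => ?_
        grw [sq_lintegral_mul_le_lintegral_mul_lintegral_mul_sq (hk.of_uncurry_left) hw, hA a]
    _ = A * ∫⁻ b, (∫⁻ a, k a b ∂μ) * w b ^ 2 ∂ν := by
        rw [lintegral_const_mul _ hkw.lintegral_prod_right, lintegral_lintegral_swap
          hkw.aemeasurable]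
        simp_rw [lintegral_mul_const _ (hk.of_uncurry_right)]
    _ ≤ A * ∫⁻ b, B * w b ^ 2 ∂ν := by
        gcongr 1
        exact lintegral_mono_ae (hB.mono fun b hb => by gcongr)
    _ = A * B * ∫⁻ b, w b ^ 2 ∂ν := by
        rw [lintegral_const_mul _ (hw.pow_const 2), mul_assoc]

end Schur

local notation "ν[" D ", " t "]" =>
  Measure.prod (Measure.restrict volume (Ioo (0 : ℝ) t)) (Measure.restrict volume D)

section HeatKernel

variable {d : ℕ} {D : Set (Euc d)} {c₂ t : ℝ} {u : ℝ → Euc d → ℝ}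

theorem lintegral_gaussKer_cylinder_le (hc₂ : 0 < c₂) (x : Euc d) :
    ∫⁻ p, ENNReal.ofReal (gaussKer d c₂ (t - p.1) x p.2) ∂ν[D, t] ≤
      ENNReal.ofReal ((π / c₂) ^ (d / 2 : ℝ)) * ENNReal.ofReal t := by
  have hmeas : Measurable fun p : ℝ × Euc d => gaussKer d c₂ (t - p.1) x p.2 :=
    (measurable_gaussKer_sub d c₂ t).comp measurable_prodMk_left
  rw [lintegral_prod _ hmeas.ennreal_ofReal.aemeasurable]
  calc ∫⁻ s in Ioo 0 t, ∫⁻ y in D, ENNReal.ofReal (gaussKer d c₂ (t - (s, y).1) x (s, y).2)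
      ≤ ∫⁻ _ in Ioo 0 t, ENNReal.ofReal ((π / c₂) ^ (d / 2 : ℝ)) :=
        setLIntegral_mono' measurableSet_Ioo fun s hs =>
          setLIntegral_gaussKer_le hc₂ (sub_pos.2 hs.2) D x
    _ = _ := by rw [setLIntegral_const, Real.volume_Ioo, sub_zero]

theorem ae_lintegral_gaussKer_cylinder_le (hc₂ : 0 < c₂) (hDm : MeasurableSet D) :
    ∀ᵐ p ∂ν[D, t], ∫⁻ x in D, ENNReal.ofReal (gaussKer d c₂ (t - p.1) x p.2) ≤
      ENNReal.ofReal ((π / c₂) ^ (d / 2 : ℝ)) := by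
  rw [Measure.prod_restrict]
  filter_upwards [ae_restrict_mem (measurableSet_Ioo.prod hDm)] with p hp
  simp_rw [gaussKer_comm _ p.2]
  exact setLIntegral_gaussKer_le hc₂ (sub_pos.2 hp.1.2) D p.2

theorem measurable_ofReal_mul_one_add_abs (hu : Measurable (uncurry u)) (M : ℝ) :
    Measurable fun p : ℝ × Euc d => ENNReal.ofReal (M * (1 + |u p.1 p.2|)) := by
  have : Measurable fun p : ℝ × Euc d => u p.1 p.2 := hu
  fun_prop

theorem ofReal_mul_one_add_abs_sq_le (M z : ℝ) :
    ENNReal.ofReal (M * (1 + |z|)) ^ 2 ≤ ENNReal.ofReal (2 * M ^ 2) * (1 + ‖z‖ₑ ^ 2) := by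
  have hsq : (M * (1 + |z|)) ^ 2 ≤ 2 * M ^ 2 * (1 + |z| ^ 2) := by
    nlinarith [mul_nonneg (sq_nonneg M) (sq_nonneg (1 - |z|))]
  calc ENNReal.ofReal (M * (1 + |z|)) ^ 2
      ≤ ENNReal.ofReal |M * (1 + |z|)| ^ 2 := by gcongr; exact le_abs_self _
    _ ≤ ENNReal.ofReal (2 * M ^ 2 * (1 + |z| ^ 2)) := by
        rw [← ENNReal.ofReal_pow (abs_nonneg _), sq_abs]
        exact ENNReal.ofReal_le_ofReal hsq
    _ = ENNReal.ofReal (2 * M ^ 2) * (1 + ‖z‖ₑ ^ 2) := by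
        rw [ENNReal.ofReal_mul (by positivity), ENNReal.ofReal_add zero_le_one (by positivity),
          ENNReal.ofReal_one, ENNReal.ofReal_pow (abs_nonneg _), Real.enorm_eq_ofReal_abs]

theorem lintegral_sq_ofReal_linear_growth_le (hu : Measurable (uncurry u)) (M : ℝ) :
    ∫⁻ p, ENNReal.ofReal (M * (1 + |u p.1 p.2|)) ^ 2 ∂ν[D, t] ≤
      ENNReal.ofReal (2 * M ^ 2) *
        (ENNReal.ofReal t * volume D + ∫⁻ s in Ioo 0 t, L2N D (u s) ^ 2) := by
  have hslice : ∀ s, ∫⁻ y in D, ENNReal.ofReal (M * (1 + |u s y|)) ^ 2 ≤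
      ENNReal.ofReal (2 * M ^ 2) * (volume D + L2N D (u s) ^ 2) := fun s => by
    calc ∫⁻ y in D, ENNReal.ofReal (M * (1 + |u s y|)) ^ 2
        ≤ ∫⁻ y in D, ENNReal.ofReal (2 * M ^ 2) * (1 + ‖u s y‖ₑ ^ 2) :=
          lintegral_mono fun y => ofReal_mul_one_add_abs_sq_le M (u s y)
      _ = _ := by
          rw [lintegral_const_mul' _ _ ENNReal.ofReal_ne_top, lintegral_add_left measurable_const,
            setLIntegral_one, L2N_sq]
  rw [lintegral_prod _ ((measurable_ofReal_mul_one_add_abs hu M).pow_const 2).aemeasurable]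
  calc ∫⁻ s in Ioo 0 t, ∫⁻ y in D, ENNReal.ofReal (M * (1 + |u (s, y).1 (s, y).2|)) ^ 2
      ≤ ∫⁻ s in Ioo 0 t, ENNReal.ofReal (2 * M ^ 2) * (volume D + L2N D (u s) ^ 2) :=
        lintegral_mono hslice
    _ = _ := by
        rw [lintegral_const_mul' _ _ ENNReal.ofReal_ne_top, lintegral_add_left measurable_const,
          setLIntegral_const, Real.volume_Ioo, sub_zero, mul_comm (volume D)]

theorem lintegral_abs_mul_le_lintegral_gaussKer_mul {T c₁ L : ℝ} {G : Euc d → ℝ → Euc d → ℝ → ℝ}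
    {f : ℝ → ℝ} (hDm : MeasurableSet D) (hG : GaussianProperty D T c₁ c₂ G)
    (hf : ∀ z, |f z| ≤ L * (1 + |z|)) (hu : Measurable (uncurry u)) (htT : t ≤ T) {x : Euc d}
    (hx : x ∈ D) :
    ∫⁻ s in Ioo 0 t, ∫⁻ y in D, ENNReal.ofReal |G x t y s * f (u s y)| ≤
      ∫⁻ p, ENNReal.ofReal (gaussKer d c₂ (t - p.1) x p.2) *
        ENNReal.ofReal (c₁ * L * (1 + |u p.1 p.2|)) ∂ν[D, t] := by
  have hk : Measurable fun p : ℝ × Euc d => gaussKer d c₂ (t - p.1) x p.2 :=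
    (measurable_gaussKer_sub d c₂ t).comp measurable_prodMk_left
  rw [lintegral_prod _
    (by exact (hk.ennreal_ofReal.mul (measurable_ofReal_mul_one_add_abs hu _)).aemeasurable)]
  refine setLIntegral_mono' measurableSet_Ioo fun s hs => setLIntegral_mono' hDm fun y hy => ?_
  have hGxy := hG x hx y hy s t hs.1.le hs.2 htT
  rw [← ENNReal.ofReal_mul (gaussKer_nonneg (sub_pos.2 hs.2) x y)]
  refine ENNReal.ofReal_le_ofReal ?_
  calc |G x t y s * f (u s y)|
      ≤ c₁ * gaussKer d c₂ (t - s) x y * (L * (1 + |u s y|)) := by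
        rw [abs_mul]
        exact mul_le_mul hGxy (hf _) (abs_nonneg _) ((abs_nonneg _).trans hGxy)
    _ = gaussKer d c₂ (t - s) x y * (c₁ * L * (1 + |u s y|)) := by ring

end HeatKernel

theorem stmt_4_general (d : ℕ) (D : Set (Euc d)) (hD : Bornology.IsBounded D)
    (hDm : MeasurableSet D) (T : ℝ) (c₁ c₂ L : ℝ)
    (hc₂ : 0 < c₂) :
    ∃ C : ℝ≥0∞, C ≠ ⊤ ∧
      ∀ G : Euc d → ℝ → Euc d → ℝ → ℝ, GaussianProperty D T c₁ c₂ G →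
      ∀ f : ℝ → ℝ, (∀ z : ℝ, |f z| ≤ L * (1 + |z|)) →
      ∀ u : ℝ → Euc d → ℝ, Measurable (Function.uncurry u) →
        (∀ s : ℝ, MemLp (u s) 2 (volume.restrict D)) →
      ∀ t ∈ Ioc (0 : ℝ) T,
        (∫⁻ x in D, (∫⁻ s in Ioo (0 : ℝ) t, ∫⁻ y in D,
            ENNReal.ofReal |G x t y s * f (u s y)|) ^ 2) ≤
          C * (1 + ∫⁻ s in Ioo (0 : ℝ) t, L2N D (u s) ^ 2) := by
  set K := ENNReal.ofReal ((π / c₂) ^ (d / 2 : ℝ))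
  have hDfin : volume D ≠ ⊤ := hD.measure_lt_top.ne
  refine ⟨K * ENNReal.ofReal T * K * ENNReal.ofReal (2 * (c₁ * L) ^ 2) *
    (1 + ENNReal.ofReal T * volume D), by finiteness, ?_⟩
  intro G hG f hf u hu _ t ⟨_, htT⟩
  have hk : Measurable (uncurry fun x (p : ℝ × Euc d) =>
      ENNReal.ofReal (gaussKer d c₂ (t - p.1) x p.2)) :=
    (measurable_gaussKer_sub d c₂ t).ennreal_ofReal
  have hTt : ENNReal.ofReal t ≤ ENNReal.ofReal T := ENNReal.ofReal_le_ofReal htT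
  calc _ ≤ ∫⁻ x in D, (∫⁻ p, ENNReal.ofReal (gaussKer d c₂ (t - p.1) x p.2) *
          ENNReal.ofReal (c₁ * L * (1 + |u p.1 p.2|)) ∂ν[D, t]) ^ 2 :=
        setLIntegral_mono' hDm fun x hx => by
          gcongr; exact lintegral_abs_mul_le_lintegral_gaussKer_mul hDm hG hf hu htT hx
    _ ≤ K * ENNReal.ofReal T * K *
          ∫⁻ p, ENNReal.ofReal (c₁ * L * (1 + |u p.1 p.2|)) ^ 2 ∂ν[D, t] :=
        lintegral_sq_lintegral_mul_le_of_schur hk (measurable_ofReal_mul_one_add_abs hu _)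
          (fun x => (lintegral_gaussKer_cylinder_le hc₂ x).trans (by gcongr))
          (ae_lintegral_gaussKer_cylinder_le hc₂ hDm)
    _ ≤ K * ENNReal.ofReal T * K * (ENNReal.ofReal (2 * (c₁ * L) ^ 2) *
          (ENNReal.ofReal T * volume D + ∫⁻ s in Ioo 0 t, L2N D (u s) ^ 2)) := by
        grw [lintegral_sq_ofReal_linear_growth_le hu, hTt]
    _ ≤ _ := by
        rw [mul_assoc (_ * _ * _ * _), mul_assoc (_ * _ * _)]
        gcongr
        exact add_le_one_add_mul_one_add _ _

/-- the `L²`-bound for the drift term built from a Gaussian kernel. -/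
theorem stmt_4 (d : ℕ) (D : Set (Euc d)) (hD : Bornology.IsBounded D)
    (hDm : MeasurableSet D) (T : ℝ) (hT : 0 < T) (c₁ c₂ L : ℝ)
    (hc₁ : 0 < c₁) (hc₂ : 0 < c₂) (hL : 0 < L) :
    ∃ C : ℝ≥0∞, C ≠ ⊤ ∧
      ∀ G : Euc d → ℝ → Euc d → ℝ → ℝ, GaussianProperty D T c₁ c₂ G →
      ∀ f : ℝ → ℝ, (∀ z : ℝ, |f z| ≤ L * (1 + |z|)) →
      ∀ u : ℝ → Euc d → ℝ, Measurable (Function.uncurry u) →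
        (∀ s : ℝ, MemLp (u s) 2 (volume.restrict D)) →
      ∀ t ∈ Ioc (0 : ℝ) T,
        (∫⁻ x in D, (∫⁻ s in Ioo (0 : ℝ) t, ∫⁻ y in D,
            ENNReal.ofReal |G x t y s * f (u s y)|) ^ 2) ≤
          C * (1 + ∫⁻ s in Ioo (0 : ℝ) t, L2N D (u s) ^ 2) :=
  stmt_4_general d D hD hDm T c₁ c₂ L hc₂
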